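/- (Corollary 3) Let U = {c^1,…,c^N} ⊆ ℝ^n be a finite set of nonnegative scenario vectors and let C = {ĉ^1,…,ĉ^K} ⊆ conv(U). Let α ≥ 0 be such that for each i ∈ [N] there exists ĉ ∈ conv(C) with c^i ≤ α·ĉ componentwise. If x̂ ∈ X minimizes max_{c ∈ C} cᵀx over X, then for every x ∈ X it holds that max_{c ∈ U} cᵀx̂ ≤ α · max_{c ∈ U} cᵀx; that is, an optimal solution to the robust problem with respect to C gives an α-approximation to the robust problem with respect to U. -/

import Mathlib

/-!
Every scenario of `C` lies in `conv(U)` and a linear objective attains its maximum over a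
convex hull at a generating point, so the robust value over `C` never exceeds the one over
`U`. Conversely, since `x̂ ≥ 0`, each `cᵢ ≤ α d` with `d ∈ conv(C)` gives
`cᵢᵀx̂ ≤ α dᵀx̂ ≤ α max_{C} ĉᵀx̂`. Hence
`max_U cᵀx̂ ≤ α max_C ĉᵀx̂ ≤ α max_C ĉᵀx ≤ α max_U cᵀx`.
-/

open Finset Matrix

variable {ι κ ν : Type*} [Fintype ι] [Fintype κ] [Fintype ν]

theorem dotProduct_le_of_mem_convexHull {s : Set (ι → ℝ)} {x d : ι → ℝ} {M : ℝ}
    (h : ∀ y ∈ s, y ⬝ᵥ x ≤ M) (hd : d ∈ convexHull ℝ s) : d ⬝ᵥ x ≤ M :=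
  convexHull_min h
    (convex_halfSpace_le (f := fun y => y ⬝ᵥ x)
      ⟨fun a b => add_dotProduct a b x, fun r a => smul_dotProduct r a x⟩ M) hd

noncomputable def robustValue [Nonempty κ] (c : κ → ι → ℝ) (x : ι → ℝ) : ℝ :=
  univ.sup' univ_nonempty fun k => c k ⬝ᵥ x

theorem dotProduct_le_robustValue [Nonempty κ] (c : κ → ι → ℝ) (x : ι → ℝ) (k : κ) :
    c k ⬝ᵥ x ≤ robustValue c x :=
  le_sup' (fun k => c k ⬝ᵥ x) (mem_univ k)

theorem dotProduct_le_robustValue_of_mem_convexHull [Nonempty κ] {c : κ → ι → ℝ}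
    {x d : ι → ℝ} (hd : d ∈ convexHull ℝ (Set.range c)) : d ⬝ᵥ x ≤ robustValue c x :=
  dotProduct_le_of_mem_convexHull
    (by rintro _ ⟨k, rfl⟩; exact dotProduct_le_robustValue c x k) hd

theorem robustValue_le_of_mem_convexHull [Nonempty κ] [Nonempty ν]
    {c : κ → ι → ℝ} {ĉ : ν → ι → ℝ} (hsub : ∀ l, ĉ l ∈ convexHull ℝ (Set.range c))
    (x : ι → ℝ) : robustValue ĉ x ≤ robustValue c x :=
  sup'_le _ _ fun l _ => dotProduct_le_robustValue_of_mem_convexHull (hsub l)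

theorem robustValue_le_mul_of_dominated [Nonempty κ] [Nonempty ν]
    {c : κ → ι → ℝ} {ĉ : ν → ι → ℝ} {α : ℝ} (hα : 0 ≤ α)
    (hdom : ∀ k, ∃ d ∈ convexHull ℝ (Set.range ĉ), c k ≤ α • d)
    {x : ι → ℝ} (hx : 0 ≤ x) : robustValue c x ≤ α * robustValue ĉ x := by
  refine sup'_le _ _ fun k _ => ?_
  obtain ⟨d, hd, hcd⟩ := hdom k
  calc c k ⬝ᵥ x ≤ (α • d) ⬝ᵥ x := dotProduct_le_dotProduct_of_nonneg_right hcd hx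
    _ = α * (d ⬝ᵥ x) := smul_dotProduct α d x
    _ ≤ α * robustValue ĉ x :=
      mul_le_mul_of_nonneg_left (dotProduct_le_robustValue_of_mem_convexHull hd) hα

theorem stmt_4_general {n N K : ℕ} [NeZero N] [NeZero K]
    (c : Fin N → Fin n → ℝ)
    (chat : Fin K → Fin n → ℝ)
    (hsub : ∀ k, chat k ∈ convexHull ℝ (Set.range c))
    (X : Set (Fin n → ℝ)) (hXnonneg : ∀ x ∈ X, ∀ j, 0 ≤ x j)
    (α : ℝ) (hα : 0 ≤ α)
    (hdom : ∀ i, ∃ d ∈ convexHull ℝ (Set.range chat), ∀ j, c i j ≤ α * d j)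
    (xhat : Fin n → ℝ) (hxhat : xhat ∈ X)
    (hopt : ∀ x ∈ X,
      (Finset.univ.sup' Finset.univ_nonempty fun k => ∑ j, chat k j * xhat j) ≤
        Finset.univ.sup' Finset.univ_nonempty fun k => ∑ j, chat k j * x j) :
    ∀ x ∈ X,
      (Finset.univ.sup' Finset.univ_nonempty fun i => ∑ j, c i j * xhat j) ≤
        α * (Finset.univ.sup' Finset.univ_nonempty fun i => ∑ j, c i j * x j) := by
  intro x hx
  change robustValue c xhat ≤ α * robustValue c x
  calc robustValue c xhat ≤ α * robustValue chat xhat :=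
        robustValue_le_mul_of_dominated hα hdom (hXnonneg xhat hxhat)
    _ ≤ α * robustValue chat x := mul_le_mul_of_nonneg_left (hopt x hx) hα
    _ ≤ α * robustValue c x :=
        mul_le_mul_of_nonneg_left (robustValue_le_of_mem_convexHull hsub x) hα

/-- Corollary 3: if `C ⊆ conv(U)` and every scenario of `U` is dominated by `α` times a
point of `conv(C)`, then a robust optimizer with respect to `C` is an `α`-approximation
with respect to `U`. -/
theorem stmt_4 {n N K : ℕ} [NeZero N] [NeZero K]
    (c : Fin N → Fin n → ℝ) (hc : ∀ i j, 0 ≤ c i j)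
    (chat : Fin K → Fin n → ℝ)
    (hsub : ∀ k, chat k ∈ convexHull ℝ (Set.range c))
    (X : Set (Fin n → ℝ)) (hXnonneg : ∀ x ∈ X, ∀ j, 0 ≤ x j) (hXne : X.Nonempty)
    (α : ℝ) (hα : 0 ≤ α)
    (hdom : ∀ i, ∃ d ∈ convexHull ℝ (Set.range chat), ∀ j, c i j ≤ α * d j)
    (xhat : Fin n → ℝ) (hxhat : xhat ∈ X)
    (hopt : ∀ x ∈ X,
      (Finset.univ.sup' Finset.univ_nonempty fun k => ∑ j, chat k j * xhat j) ≤
        Finset.univ.sup' Finset.univ_nonempty fun k => ∑ j, chat k j * x j) :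
    ∀ x ∈ X,
      (Finset.univ.sup' Finset.univ_nonempty fun i => ∑ j, c i j * xhat j) ≤
        α * (Finset.univ.sup' Finset.univ_nonempty fun i => ∑ j, c i j * x j) :=
  stmt_4_general c chat hsub X hXnonneg α hα hdom xhat hxhat hopt
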